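/- arXiv:2301.11056 — 3 statements merged into one kernel-verified Lean document; each statement's English description precedes it below -/
import Mathlib

section
/- Let n ≥ 2, m ≥ 1, and let p₁, …, pₙ be the first n odd primes. The group homomorphism φ : ℤⁿ → (ℤ/2ᵐℤ)ˣ sending (e₁, …, eₙ) to the class of ∏ᵢ₌₁ⁿ pᵢ^{eᵢ} is well-defined and its kernel is a subgroup of ℤⁿ of index 2^{m−1}. -/
/-!
The map `e ↦ ∏ pᵢ ^ eᵢ` is the `ℤ`-linear combination of the units `pᵢ`, so the index of its
kernel is the order of its image, and it suffices that `p₁ = 3` and `p₂ = 5` generate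
`(ℤ/2ᵐℤ)ˣ`, a group of order `2 ^ (m - 1)`. For `m ≥ 2`, `5` has order `2 ^ (m - 2)`, so `⟨5⟩`
has index two, and `3 ∉ ⟨5⟩` because `5 ≡ 1` but `3 ≢ 1` modulo `4`.
-/

/-- The i-th odd prime (1-indexed): `oddPrime 1 = 3`, `oddPrime 2 = 5`, … -/
noncomputable def oddPrime (i : ℕ) : ℕ := Nat.nth Nat.Prime i

lemma oddPrime_one : oddPrime 1 = 3 := Nat.nth_prime_one_eq_three

lemma oddPrime_two : oddPrime 2 = 5 := by
  have h := Nat.nth_count (p := Nat.Prime) (n := 5) Nat.prime_five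
  rwa [show Nat.count Nat.Prime 5 = 2 by decide] at h

lemma oddPrime_succ_coprime_two_pow (i m : ℕ) : (oddPrime (i + 1)).Coprime (2 ^ m) := by
  have h_two_lt : 2 < oddPrime (i + 1) := by
    rw [← Nat.nth_prime_zero_eq_two]
    exact Nat.nth_strictMono Nat.infinite_setOfPred_prime i.succ_pos
  exact ((Nat.coprime_primes (Nat.prime_nth_prime _) Nat.prime_two).mpr h_two_lt.ne').pow_right m

theorem Subgroup.exists_zpow_mul_zpow_eq_of_index_zpowers_eq_two {G : Type*} [Group G] {a b : G}
    (hb : (zpowers b).index = 2) (ha : a ∉ zpowers b) (x : G) :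
    ∃ s t : ℤ, a ^ s * b ^ t = x := by
  by_cases hx : x ∈ zpowers b
  · obtain ⟨t, rfl⟩ := mem_zpowers_iff.mp hx
    exact ⟨0, t, by simp⟩
  · have h : a⁻¹ * x ∈ zpowers b := by
      rw [mul_mem_iff_of_index_two hb, inv_mem_iff]
      exact iff_of_false ha hx
    obtain ⟨t, ht⟩ := mem_zpowers_iff.mp h
    exact ⟨1, t, by rw [ht, zpow_one, mul_inv_cancel_left]⟩

namespace ZMod

theorem card_units_two_pow (m : ℕ) : Nat.card (ZMod (2 ^ m))ˣ = 2 ^ (m - 1) := by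
  rcases m with _ | m
  · simp
  · rw [Nat.card_eq_fintype_card, card_units_eq_totient,
      Nat.totient_prime_pow_succ Nat.prime_two]
    simp

theorem index_zpowers_eq_two_of_val_eq_five (m : ℕ) {b : (ZMod (2 ^ (m + 2)))ˣ}
    (hb : (b : ZMod (2 ^ (m + 2))) = 5) : (Subgroup.zpowers b).index = 2 := by
  have h := (Subgroup.zpowers b).index_mul_card
  rw [Nat.card_zpowers, ← orderOf_units, hb, orderOf_five, card_units_two_pow,
    show m + 2 - 1 = m + 1 from rfl, pow_succ' 2 m] at h
  exact Nat.eq_of_mul_eq_mul_right (by positivity) h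

theorem notMem_zpowers_of_val_eq_three_of_val_eq_five (m : ℕ) {a b : (ZMod (2 ^ (m + 2)))ˣ}
    (ha : (a : ZMod (2 ^ (m + 2))) = 3) (hb : (b : ZMod (2 ^ (m + 2))) = 5) :
    a ∉ Subgroup.zpowers b := by
  have h4 : 4 ∣ 2 ^ (m + 2) := Dvd.intro_left _ (pow_add 2 m 2).symm
  have hval (u : (ZMod (2 ^ (m + 2)))ˣ) : (unitsMap h4 u : ZMod 4) = castHom h4 (ZMod 4) u := rfl
  have hb4 : unitsMap h4 b = 1 := Units.ext <| by rw [hval, hb, map_ofNat]; decide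
  have ha4 : unitsMap h4 a ≠ 1 := fun h => by
    have h3 := congrArg Units.val h
    rw [hval, ha, map_ofNat] at h3
    exact absurd h3 (by decide)
  intro hab
  obtain ⟨k, rfl⟩ := Subgroup.mem_zpowers_iff.mp hab
  exact ha4 (by rw [map_zpow, hb4, one_zpow])

theorem exists_zpow_mul_zpow_eq_of_val_eq_three_of_val_eq_five {m : ℕ} {a b : (ZMod (2 ^ m))ˣ}
    (ha : (a : ZMod (2 ^ m)) = 3) (hb : (b : ZMod (2 ^ m)) = 5) (x : (ZMod (2 ^ m))ˣ) :
    ∃ s t : ℤ, a ^ s * b ^ t = x := by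
  obtain hm | ⟨m, rfl⟩ : m ≤ 1 ∨ ∃ k, m = k + 2 := by
    rcases m with _ | _ | m <;> simp
  · have : Subsingleton (ZMod (2 ^ m))ˣ := by
      rw [← Finite.card_le_one_iff_subsingleton, card_units_two_pow,
        Nat.sub_eq_zero_of_le hm, pow_zero]
    exact ⟨0, 0, Subsingleton.elim _ _⟩
  · exact Subgroup.exists_zpow_mul_zpow_eq_of_index_zpowers_eq_two
      (index_zpowers_eq_two_of_val_eq_five m hb)
      (notMem_zpowers_of_val_eq_three_of_val_eq_five m ha hb) x

end ZMod

theorem kernel_sublattice_index_general (n m : ℕ) (hn : 2 ≤ n) :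
    ∃ φ : (Fin n → ℤ) →+ Additive (ZMod (2 ^ m))ˣ,
      (∀ e : Fin n → ℕ,
        ((Additive.toMul (φ fun i => (e i : ℤ)) : (ZMod (2 ^ m))ˣ) : ZMod (2 ^ m))
          = ∏ i : Fin n, (oddPrime (i.val + 1) : ZMod (2 ^ m)) ^ (e i)) ∧
      (AddMonoidHom.ker φ).index = 2 ^ (m - 1) := by
  let p : Fin n → (ZMod (2 ^ m))ˣ := fun i =>
    ZMod.unitOfCoprime _ (oddPrime_succ_coprime_two_pow i m)
  let φ := (Fintype.linearCombination ℤ fun i => Additive.ofMul (p i)).toAddMonoidHom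
  have hφ_surj : Function.Surjective φ := fun x => by
    let i₁ : Fin n := ⟨0, by omega⟩
    let i₂ : Fin n := ⟨1, by omega⟩
    obtain ⟨s, t, hst⟩ := ZMod.exists_zpow_mul_zpow_eq_of_val_eq_three_of_val_eq_five
      (a := p i₁) (b := p i₂) (by simp [p, i₁, oddPrime_one]) (by simp [p, i₂, oddPrime_two])
      x.toMul
    refine ⟨Pi.single i₁ s + Pi.single i₂ t, Additive.toMul.injective ?_⟩
    simpa [φ] using hst
  refine ⟨φ, fun e => ?_, ?_⟩
  · simp [φ, p, Fintype.linearCombination_apply, toMul_sum]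
  · rw [AddSubgroup.index_ker, AddMonoidHom.range_eq_top.mpr hφ_surj, AddSubgroup.card_top]
    exact ZMod.card_units_two_pow m

/-- For `n ≥ 2`, `m ≥ 1`, the group homomorphism `φ : ℤⁿ → (ℤ/2ᵐℤ)ˣ` sending
`(e₁, …, eₙ)` to the class of `∏ pᵢ^{eᵢ}` (where `p₁, …, pₙ` are the first `n`
odd primes) is well-defined — i.e. such a homomorphism exists, and on
nonnegative exponent vectors it is given by the indicated product — and its
kernel is a subgroup of `ℤⁿ` of index `2^(m-1)`. -/
theorem kernel_sublattice_index (n m : ℕ) (hn : 2 ≤ n) (hm : 1 ≤ m) :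
    ∃ φ : (Fin n → ℤ) →+ Additive (ZMod (2 ^ m))ˣ,
      (∀ e : Fin n → ℕ,
        ((Additive.toMul (φ fun i => (e i : ℤ)) : (ZMod (2 ^ m))ˣ) : ZMod (2 ^ m))
          = ∏ i : Fin n, (oddPrime (i.val + 1) : ZMod (2 ^ m)) ^ (e i)) ∧
      (AddMonoidHom.ker φ).index = 2 ^ (m - 1) :=
  kernel_sublattice_index_general n m hn
end

section
/- For every n ≥ 1, every full-rank lattice L in ℝⁿ contains a nonzero vector x with ‖x‖₁ ≤ (n!·det(L))^{1/n}. -/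
/-!
The ℓ¹ ball of radius `r` in `ℝⁿ` is a symmetric compact convex body of volume `(2r)ⁿ / n!`.
Minkowski's convex body theorem yields a nonzero lattice point in it as soon as this volume is
at least `2ⁿ · det L`, which holds with equality for `rⁿ = n! · det L`.
-/

open MeasureTheory

def l1Ball (ι : Type*) [Fintype ι] (r : ℝ) : Set (ι → ℝ) := {x | ∑ i, |x i| ≤ r}

section L1Ball

variable {ι : Type*} [Fintype ι]

theorem l1Ball_eq_preimage_closedBall (r : ℝ) :
    l1Ball ι r = WithLp.toLp 1 ⁻¹' Metric.closedBall (0 : PiLp 1 fun _ : ι ↦ ℝ) r := by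
  ext x
  simp [l1Ball, PiLp.norm_eq_of_L1]

theorem neg_mem_l1Ball {r : ℝ} {x : ι → ℝ} (hx : x ∈ l1Ball ι r) : -x ∈ l1Ball ι r := by
  simpa [l1Ball] using hx

theorem convex_l1Ball (r : ℝ) : Convex ℝ (l1Ball ι r) := by
  rw [l1Ball_eq_preimage_closedBall]
  exact (convex_closedBall _ r).linear_preimage (WithLp.linearEquiv 1 ℝ (ι → ℝ)).symm.toLinearMap

theorem isCompact_l1Ball (r : ℝ) : IsCompact (l1Ball ι r) := by
  rw [l1Ball_eq_preimage_closedBall]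
  exact (PiLp.continuousLinearEquiv 1 ℝ fun _ : ι ↦ ℝ).symm.toHomeomorph.isCompact_preimage.2
    (isCompact_closedBall _ r)

theorem volume_l1Ball [Nonempty ι] {r : ℝ} (hr : 0 ≤ r) :
    volume (l1Ball ι r) =
      ENNReal.ofReal (r ^ Fintype.card ι * 2 ^ Fintype.card ι / (Fintype.card ι).factorial) := by
  have hvol := volume_sum_rpow_le (ι := ι) le_rfl r
  simp only [Real.rpow_one, div_one, one_add_one_eq_two, Real.Gamma_two, mul_one,
    Real.Gamma_nat_eq_factorial] at hvol
  rw [l1Ball, hvol, ← ENNReal.ofReal_pow hr, ← ENNReal.ofReal_mul (by positivity), mul_div_assoc]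

end L1Ball

namespace ZSpan

theorem exists_ne_zero_mem_span_of_measure_mul_two_pow_le {ι E : Type*} [Finite ι]
    [NormedAddCommGroup E] [NormedSpace ℝ E] [MeasurableSpace E] [BorelSpace E]
    [FiniteDimensional ℝ E] [Nontrivial E] (μ : Measure E) [μ.IsAddHaarMeasure]
    (b : Module.Basis ι ℝ E) {s : Set E} (h_symm : ∀ x ∈ s, -x ∈ s) (h_conv : Convex ℝ s)
    (h_cpt : IsCompact s) (h : μ (fundamentalDomain b) * 2 ^ Module.finrank ℝ E ≤ μ s) :
    ∃ x ∈ Submodule.span ℤ (Set.range b), x ≠ 0 ∧ x ∈ s := by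
  have : Countable (Submodule.span ℤ (Set.range b)).toAddSubgroup :=
    inferInstanceAs (Countable (Submodule.span ℤ (Set.range b)))
  obtain ⟨⟨x, hx⟩, hx0, hxs⟩ := exists_ne_zero_mem_lattice_of_measure_mul_two_pow_le_measure
    (ZSpan.isAddFundamentalDomain' b μ) h_symm h_conv h_cpt h
  exact ⟨x, hx, by simpa using hx0, hxs⟩

theorem exists_ne_zero_mem_span_sum_abs_le {ι : Type*} [Fintype ι] [DecidableEq ι]
    [Nonempty ι] (b : Module.Basis ι ℝ (ι → ℝ)) {r : ℝ} (hr : 0 ≤ r)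
    (hr_pow : r ^ Fintype.card ι = (Fintype.card ι).factorial * |(Matrix.of b).det|) :
    ∃ x ∈ Submodule.span ℤ (Set.range b), x ≠ 0 ∧ ∑ i, |x i| ≤ r := by
  refine exists_ne_zero_mem_span_of_measure_mul_two_pow_le volume b (s := l1Ball ι r)
    (fun _ ↦ neg_mem_l1Ball) (convex_l1Ball r) (isCompact_l1Ball r) (le_of_eq ?_)
  rw [volume_fundamentalDomain, volume_l1Ball hr, Module.finrank_fintype_fun_eq_card,
    hr_pow, ← ENNReal.ofReal_ofNat 2, ← ENNReal.ofReal_pow zero_le_two,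
    ← ENNReal.ofReal_mul (abs_nonneg _)]
  congr 1
  field_simp

end ZSpan

/-- Minkowski's bound for the ℓ¹ norm: every full-rank lattice in `ℝⁿ`
(the ℤ-span of an ℝ-basis, given by the rows `b` of a matrix with nonzero
determinant, whose covolume is `|det b|`) contains a nonzero vector `x` with
`‖x‖₁ ≤ (n! · det L)^(1/n)`. -/
theorem minkowski_l1_bound (n : ℕ) (hn : 1 ≤ n) (b : Fin n → Fin n → ℝ)
    (hb : (Matrix.of b).det ≠ 0) :
    ∃ x ∈ Submodule.span ℤ (Set.range b), x ≠ 0 ∧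
      ∑ i, |x i| ≤ ((n.factorial : ℝ) * |(Matrix.of b).det|) ^ ((1 : ℝ) / n) := by
  have : NeZero n := ⟨by omega⟩
  classical
  have hli : LinearIndependent ℝ b := Matrix.linearIndependent_rows_of_det_ne_zero hb
  have hr_pow : (((n.factorial : ℝ) * |(Matrix.of b).det|) ^ ((1 : ℝ) / n)) ^ n =
      n.factorial * |(Matrix.of b).det| := by
    rw [one_div]
    exact Real.rpow_inv_natCast_pow (by positivity) (NeZero.ne n)
  simpa [coe_basisOfPiSpaceOfLinearIndependent hli] using
    ZSpan.exists_ne_zero_mem_span_sum_abs_le (basisOfPiSpaceOfLinearIndependent hli)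
      (by positivity) (by simpa [coe_basisOfPiSpaceOfLinearIndependent hli] using hr_pow)
end

section
/- Let p₁, p₂, … be the odd primes in increasing order, and let m : ℕ → ℕ be a function with m(n)/(n·log n/log 2) → 1 as n → ∞. Then for every ε > 0, the quantity (2^{m(n)−1}·n³·∏ᵢ₌₁ⁿ log pᵢ)^{1/(n+1)} is O(n^{1+ε}) as n → ∞. -/
/-!
Eventually `m(n) ≤ (1 + ε/2) n log₂ n`, so `2 ^ m(n) ≤ n ^ ((1 + ε/2) n)`. Chebyshev's lower bound
`ψ(x) ≥ x log 2 - log (x + 1)` at `x = pₙ`, where `π(pₙ) = n + 1`, combined with the crude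
Bertrand bound `pₙ < 2 ^ (n + 2)`, gives `pₙ ≤ (n + 2)²`. Hence `log pᵢ ≤ log pₙ = O(log n)` is
eventually below `n ^ (ε/4)`, and the product of the `n` logarithms is at most `n ^ (ε n / 4)`.
Altogether the quantity under the `(n + 1)`-th root is at most `n ^ ((1 + ε)(n + 1))` as soon
as `ε n ≥ 8`.
-/

open Nat hiding log
open Filter Asymptotics Real

theorem nth_prime_succ_le_two_mul (n : ℕ) : nth Nat.Prime (n + 1) ≤ 2 * nth Nat.Prime n := by
  obtain ⟨q, hq, hlt, hle⟩ :=
    exists_prime_lt_and_le_two_mul (nth Nat.Prime n) (prime_nth_prime n).ne_zero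
  by_contra! h
  exact (le_nth_of_lt_nth_succ (h.trans_le' hle) hq).not_gt hlt

theorem nth_prime_le_two_pow (n : ℕ) : nth Nat.Prime n ≤ 2 ^ (n + 1) := by
  induction n with
  | zero => simp
  | succ n ih => rw [pow_succ]; linarith [nth_prime_succ_le_two_mul n]

theorem primeCounting_nth_prime (n : ℕ) : primeCounting (nth Nat.Prime n) = n + 1 :=
  count_nth_succ_of_infinite infinite_setOfPred_prime n

theorem nth_prime_mul_log_two_le (n : ℕ) :
    (nth Nat.Prime n : ℝ) * log 2 ≤ (n + 2) * log (nth Nat.Prime n + 1) := by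
  set p := nth Nat.Prime n
  have hp : (1 : ℝ) < p := mod_cast (prime_nth_prime n).one_lt
  have hψ := (Chebyshev.psi_ge p).trans (Chebyshev.psi_le_primeCounting_mul_log p)
  rw [primeCounting_nth_prime] at hψ
  have hlog : log p ≤ log (p + 1) := log_le_log (by linarith) (by linarith)
  push_cast at hψ
  nlinarith [log_pos hp]

theorem nth_prime_le_sq (n : ℕ) : nth Nat.Prime n ≤ (n + 2) ^ 2 := by
  set p := nth Nat.Prime n
  have hlog2 := Real.log_pos one_lt_two
  have hbertrand : p + 1 ≤ 2 ^ (n + 2) := by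
    have := Nat.one_le_two_pow (n := n + 1)
    rw [pow_succ]
    linarith [nth_prime_le_two_pow n]
  have hlog : log (p + 1) ≤ (n + 2) * log 2 :=
    calc log (p + 1) ≤ log (2 ^ (n + 2)) := log_le_log (by positivity) (mod_cast hbertrand)
      _ = (n + 2) * log 2 := by rw [Real.log_pow]; push_cast; ring
  have hp : (p : ℝ) ≤ (n + 2) ^ 2 :=
    le_of_mul_le_mul_right (by nlinarith [nth_prime_mul_log_two_le n]) hlog2
  exact_mod_cast hp

theorem log_nth_prime_isBigO_log :
    (fun n : ℕ => log (nth Nat.Prime n)) =O[atTop] fun n : ℕ => log n := by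
  refine IsBigO.of_bound 4 ?_
  filter_upwards [eventually_ge_atTop 2] with n hn
  have hn' : (2 : ℝ) ≤ n := mod_cast hn
  have hp : (1 : ℝ) < nth Nat.Prime n := mod_cast (prime_nth_prime n).one_lt
  have hsq : (nth Nat.Prime n : ℝ) ≤ (n : ℝ) ^ 4 :=
    calc (nth Nat.Prime n : ℝ) ≤ ((n + 2) ^ 2 : ℕ) := mod_cast nth_prime_le_sq n
      _ ≤ ((n : ℝ) ^ 2) ^ 2 := by push_cast; gcongr; nlinarith
      _ = (n : ℝ) ^ 4 := by ring
  rw [norm_of_nonneg (log_nonneg hp.le), norm_of_nonneg (log_nonneg (by linarith))]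
  calc log (nth Nat.Prime n) ≤ log ((n : ℝ) ^ 4) := log_le_log (by linarith) hsq
    _ = 4 * log n := by rw [Real.log_pow]; norm_num

theorem log_nth_prime_isLittleO_rpow {δ : ℝ} (hδ : 0 < δ) :
    (fun n : ℕ => log (nth Nat.Prime n)) =o[atTop] fun n : ℕ => (n : ℝ) ^ δ :=
  log_nth_prime_isBigO_log.trans_isLittleO <|
    (isLittleO_log_rpow_atTop hδ).comp_tendsto tendsto_natCast_atTop_atTop

theorem eventually_prod_log_nth_prime_le {δ : ℝ} (hδ : 0 < δ) :
    ∀ᶠ n : ℕ in atTop, ∏ i ∈ Finset.Icc 1 n, log (nth Nat.Prime i) ≤ (n : ℝ) ^ (δ * n) := by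
  filter_upwards [(log_nth_prime_isLittleO_rpow hδ).bound one_pos] with n hn
  have hlog_nonneg (i : ℕ) : 0 ≤ log (nth Nat.Prime i) :=
    log_nonneg (mod_cast (prime_nth_prime i).one_lt.le)
  rw [one_mul, norm_of_nonneg (hlog_nonneg n), norm_of_nonneg (by positivity)] at hn
  calc ∏ i ∈ Finset.Icc 1 n, log (nth Nat.Prime i)
      ≤ ∏ _i ∈ Finset.Icc 1 n, (n : ℝ) ^ δ := by
        refine Finset.prod_le_prod (fun i _ => hlog_nonneg i) fun i hi => hn.trans' ?_
        refine log_le_log (mod_cast (prime_nth_prime i).pos) ?_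
        exact_mod_cast nth_monotone infinite_setOfPred_prime (Finset.mem_Icc.1 hi).2
    _ = (n : ℝ) ^ (δ * n) := by
        rw [Finset.prod_const, card_Icc, add_tsub_cancel_right, ← rpow_natCast,
          ← rpow_mul n.cast_nonneg]

theorem eventually_two_pow_le_rpow_of_tendsto (m : ℕ → ℕ)
    (hm : Tendsto (fun n : ℕ => (m n : ℝ) / ((n : ℝ) * log n / log 2)) atTop (nhds 1))
    {δ : ℝ} (hδ : 0 < δ) :
    ∀ᶠ n : ℕ in atTop, (2 : ℝ) ^ m n ≤ (n : ℝ) ^ ((1 + δ) * n) := by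
  filter_upwards [hm.eventually_lt_const (lt_add_of_pos_right 1 hδ),
    eventually_ge_atTop 2] with n hlt hn
  have hn' : (1 : ℝ) < n := mod_cast hn
  have hbound : (m n : ℝ) * log 2 ≤ log n * ((1 + δ) * n) := by
    rw [div_lt_iff₀ (by have := log_pos hn'; positivity)] at hlt
    have := Real.log_pos one_lt_two
    field_simp at hlt
    nlinarith
  rw [← rpow_natCast, rpow_def_of_pos two_pos, rpow_def_of_pos (by linarith), exp_le_exp]
  linarith

theorem rpow_one_div_le_rpow {b x a t : ℝ} (hb : 0 ≤ b) (hx : 0 ≤ x) (ht : 0 < t)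
    (h : b ≤ x ^ (a * t)) : b ^ (1 / t) ≤ x ^ a := by
  rw [one_div, rpow_inv_le_iff_of_pos hb (rpow_nonneg hx a) ht, ← rpow_mul hx]
  exact h

open Filter in
/-- If `m(n) ~ n·log₂ n`, then `(2^(m(n)-1) · n³ · ∏ᵢ₌₁ⁿ log pᵢ)^(1/(n+1)) = O(n^(1+ε))`
for every `ε > 0`, where `pᵢ` is the i-th odd prime. -/
theorem det_root_isBigO (m : ℕ → ℕ)
    (hm : Tendsto (fun n : ℕ => (m n : ℝ) / ((n : ℝ) * Real.log n / Real.log 2))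
      atTop (nhds 1)) :
    ∀ ε : ℝ, 0 < ε →
      (fun n : ℕ => ((2 : ℝ) ^ (m n - 1) * (n : ℝ) ^ 3 *
          ∏ i ∈ Finset.Icc 1 n, Real.log (Nat.nth Nat.Prime i)) ^ ((1 : ℝ) / ((n : ℝ) + 1)))
        =O[atTop] fun n : ℕ => (n : ℝ) ^ ((1 : ℝ) + ε) := by
  intro ε hε
  refine IsBigO.of_bound' ?_
  filter_upwards [eventually_two_pow_le_rpow_of_tendsto m hm (half_pos hε),
    eventually_prod_log_nth_prime_le (by positivity : 0 < ε / 4),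
    tendsto_natCast_atTop_atTop.eventually_ge_atTop (8 / ε),
    eventually_ge_atTop 1] with n hpow hprod hεn hn
  have hn : (1 : ℝ) ≤ n := mod_cast hn
  have hB : (2 : ℝ) ^ (m n - 1) * (n : ℝ) ^ 3 * ∏ i ∈ Finset.Icc 1 n, log (nth Nat.Prime i)
      ≤ (n : ℝ) ^ ((1 + ε) * (n + 1)) :=
    calc _ ≤ (2 : ℝ) ^ m n * (n : ℝ) ^ 3 * ∏ i ∈ Finset.Icc 1 n, log (nth Nat.Prime i) := by
          gcongr
          exacts [one_le_two, (m n).sub_le 1]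
      _ ≤ (n : ℝ) ^ ((1 + ε / 2) * n) * (n : ℝ) ^ (3 : ℝ) * (n : ℝ) ^ (ε / 4 * n) := by
          rw [← rpow_natCast (n : ℝ) 3, Nat.cast_ofNat]
          gcongr
      _ = (n : ℝ) ^ ((1 + ε / 2) * n + 3 + ε / 4 * n) := by
          rw [rpow_add (by linarith), rpow_add (by linarith)]
      _ ≤ (n : ℝ) ^ ((1 + ε) * (n + 1)) := by
          refine rpow_le_rpow_of_exponent_le hn ?_
          rw [div_le_iff₀ hε] at hεn
          nlinarith
  rw [norm_of_nonneg (rpow_nonneg (by positivity) _), norm_of_nonneg (by positivity)]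
  exact rpow_one_div_le_rpow (by positivity) (by linarith) (by positivity) hB
end
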